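/- For every s > ((b+1)/√b)·s*, define the affine function A_s : ℝ² → ℝ by A_s(y) = f^(r₀)(y_min, s) + ⟨v, y − (y_min, s)⟩ with v = (y_mid, (b/(b+1))·s). Then A_s(y_max, s) = f^(r₀)(y_max, s) and A_s(y) ≤ f^(r₀)(y) for all y ∈ ℝ². -/
import Mathlib


/-- The condensed energy `f^(r)` associated with the dissipation function `r`
and the hardening parameter `b`. -/
noncomputable def condensed (b : ℝ) (r : ℝ → ℝ) (y : ℝ × ℝ) : ℝ :=
  (1 / 2) * (y.1 ^ 2 + y.2 ^ 2) - (max (|y.2| - r y.1) 0) ^ 2 / (2 * (b + 1))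

/-- The piecewise affine dissipation function `r₀`. -/
noncomputable def r0 (b ymin ymax : ℝ) (t : ℝ) : ℝ :=
  if t ∈ Set.Icc ymin ymax then
    Real.sqrt b * ((ymax - ymin) / 2 - |t - (ymin + ymax) / 2|)
  else 0

private lemma aux_key (b β S t w a s : ℝ) (hβb : β ^ 2 = b) (hβ0 : 0 < β)
    (ht : 0 ≤ t) (hwge : s - a ≤ w) (hβs : (b + 1) * S ≤ β * s) :
    2 * (b + 1) * S * t ≤ b * w ^ 2 + 2 * β * t * a + t ^ 2 := by
  nlinarith [sq_nonneg (β * w - t), mul_nonneg (mul_nonneg hβ0.le ht) (by linarith : (0:ℝ) ≤ w - (s - a)), mul_nonneg ht (by linarith : (0:ℝ) ≤ β * s - (b + 1) * S)]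

set_option maxHeartbeats 1000000 in
theorem stmt_11 (b ymin ymax : ℝ) (hb : 0 < b) (hy : ymin < ymax)
    (sstar ymid : ℝ) (hs : sstar = (ymax - ymin) / 2) (hm : ymid = (ymin + ymax) / 2) :
    ∀ s : ℝ, ((b + 1) / Real.sqrt b) * sstar < s →
      ∀ (v : ℝ × ℝ) (As : ℝ × ℝ → ℝ),
        v = (ymid, (b / (b + 1)) * s) →
        (∀ y : ℝ × ℝ, As y = condensed b (r0 b ymin ymax) (ymin, s)
            + (v.1 * (y.1 - ymin) + v.2 * (y.2 - s))) →
        As (ymax, s) = condensed b (r0 b ymin ymax) (ymax, s) ∧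
        ∀ y : ℝ × ℝ, As y ≤ condensed b (r0 b ymin ymax) y := by
  subst hs hm
  intro s hsgt v As hv hA
  set β := Real.sqrt b with hβdef
  have hβ0 : 0 < β := Real.sqrt_pos.mpr hb
  have hβb : β ^ 2 = b := Real.sq_sqrt hb.le
  have hsstar : 0 < (ymax - ymin) / 2 := by linarith
  have hβs : (b + 1) * ((ymax - ymin) / 2) < β * s := by
    rw [div_mul_eq_mul_div, div_lt_iff₀ hβ0] at hsgt
    linarith
  have hb1 : (0:ℝ) < b + 1 := by linarith
  have hspos : 0 < s := by
    have h : 0 < (b + 1) / β * ((ymax - ymin) / 2) := by positivity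
    linarith
  have hrmin : r0 b ymin ymax ymin = 0 := by
    unfold r0
    rw [if_pos ⟨le_refl _, hy.le⟩]
    have h : |ymin - (ymin + ymax) / 2| = (ymax - ymin) / 2 := by
      rw [abs_of_nonpos (by linarith)]; ring
    rw [h]; ring
  have hrmax : r0 b ymin ymax ymax = 0 := by
    unfold r0
    rw [if_pos ⟨hy.le, le_refl _⟩]
    have h : |ymax - (ymin + ymax) / 2| = (ymax - ymin) / 2 := by
      rw [abs_of_nonneg (by linarith)]; ring
    rw [h]; ring
  have hcmin : condensed b (r0 b ymin ymax) (ymin, s)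
      = (1/2) * (ymin ^ 2 + s ^ 2) - s ^ 2 / (2 * (b + 1)) := by
    simp only [condensed]
    rw [hrmin, sub_zero, abs_of_pos hspos, max_eq_left hspos.le]
  have hcmax : condensed b (r0 b ymin ymax) (ymax, s)
      = (1/2) * (ymax ^ 2 + s ^ 2) - s ^ 2 / (2 * (b + 1)) := by
    simp only [condensed]
    rw [hrmax, sub_zero, abs_of_pos hspos, max_eq_left hspos.le]
  constructor
  · rw [hA, hv, hcmin, hcmax]
    simp only
    ring
  · rintro ⟨y1, y2⟩
    set r := r0 b ymin ymax y1 with hrdef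
    set M := max (|y2| - r) 0 with hMdef
    set Q := (b + 1) * (y1 - ymin) * (y1 - ymax) + b * (y2 - s) ^ 2 + y2 ^ 2 with hQdef
    -- the fundamental identity
    have hident : condensed b (r0 b ymin ymax) (y1, y2) - As (y1, y2)
        = (Q - M ^ 2) / (2 * (b + 1)) := by
      rw [hA, hv, hcmin]
      simp only [condensed]
      rw [← hrdef, ← hMdef]
      field_simp
      ring
    -- M^2 ≤ (|y2| - r)^2
    have hM0 : 0 ≤ M := le_max_right _ _
    have hMle : M ≤ |(|y2| - r)| := max_le (le_abs_self _) (abs_nonneg _)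
    have hM2 : M ^ 2 ≤ (|y2| - r) ^ 2 := by
      calc M ^ 2 ≤ |(|y2| - r)| ^ 2 := pow_le_pow_left₀ hM0 hMle 2
        _ = (|y2| - r) ^ 2 := sq_abs _
    have hkey : (|y2| - r) ^ 2 ≤ Q := by
      by_cases hmem : y1 ∈ Set.Icc ymin ymax
      · have hr : r = β * ((ymax - ymin) / 2 - |y1 - (ymin + ymax) / 2|) := by
          rw [hrdef]; unfold r0; rw [if_pos hmem]
        obtain ⟨h1, h2⟩ := hmem
        set d := |y1 - (ymin + ymax) / 2| with hddef
        have hd0 : 0 ≤ d := abs_nonneg _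
        have hds : d ≤ (ymax - ymin) / 2 := by
          rw [hddef, abs_le]; constructor <;> linarith
        have hd2 : d ^ 2 = (y1 - (ymin + ymax) / 2) ^ 2 := sq_abs _
        set w := |y2 - s| with hwdef
        have hw2 : w ^ 2 = (y2 - s) ^ 2 := sq_abs _
        have hwge : s - |y2| ≤ w := by
          calc s - |y2| = |s| - |y2| := by rw [abs_of_pos hspos]
            _ ≤ |s - y2| := abs_sub_abs_le_abs_sub s y2
            _ = w := by rw [hwdef, abs_sub_comm]
        have ha0 : 0 ≤ |y2| := abs_nonneg _
        have ht : 0 ≤ (ymax - ymin) / 2 - d := by linarith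
        have hprod : (y1 - ymin) * (y1 - ymax) = d ^ 2 - ((ymax - ymin) / 2) ^ 2 := by
          rw [hd2]; ring
        have haux := aux_key b β ((ymax - ymin) / 2) ((ymax - ymin) / 2 - d) w |y2| s
          hβb hβ0 ht hwge hβs.le
        have ha2 : |y2| ^ 2 = y2 ^ 2 := sq_abs y2
        rw [hr, hQdef]
        have hLHS : (|y2| - β * ((ymax - ymin) / 2 - |y1 - (ymin + ymax) / 2|)) ^ 2
            = y2 ^ 2 - 2 * β * ((ymax - ymin) / 2 - d) * |y2|
              + b * ((ymax - ymin) / 2 - d) ^ 2 := by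
          rw [← hddef]
          linear_combination ha2 + ((ymax - ymin) / 2 - d) ^ 2 * hβb
        have hprod' : (b + 1) * (y1 - ymin) * (y1 - ymax)
            = (b + 1) * d ^ 2 - (b + 1) * ((ymax - ymin) / 2) ^ 2 := by
          rw [mul_assoc, hprod]; ring
        have hbw : b * (y2 - s) ^ 2 = b * w ^ 2 := by rw [hw2]
        rw [hLHS]
        linarith [haux, hprod', hbw]
      · have hr : r = 0 := by rw [hrdef]; unfold r0; rw [if_neg hmem]
        have hout : 0 ≤ (y1 - ymin) * (y1 - ymax) := by
          rw [Set.mem_Icc, not_and_or] at hmem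
          rcases hmem with h | h <;> push_neg at h
          · exact (mul_pos_of_neg_of_neg (by linarith) (by linarith)).le
          · exact (mul_pos (by linarith) (by linarith)).le
        rw [hr, hQdef, sub_zero, sq_abs]
        have h1 : 0 ≤ (b + 1) * (y1 - ymin) * (y1 - ymax) := by
          rw [mul_assoc]; exact mul_nonneg hb1.le hout
        have h2 : 0 ≤ b * (y2 - s) ^ 2 := mul_nonneg hb.le (sq_nonneg _)
        linarith
    have : 0 ≤ condensed b (r0 b ymin ymax) (y1, y2) - As (y1, y2) := by
      rw [hident]
      apply div_nonneg (by linarith) (by linarith)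
    linarith
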